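/- arXiv:2006.09371 — 2 statements merged into one kernel-verified Lean document; each statement's English description precedes it below -/
import Mathlib

section
/- Let X be a proper submodule of M. The following are equivalent: (1) X is φ-prime; (2) for every right ideal I of R and every submodule Y of M, YI ⊆ X and YI ⊄ φ(X) imply Y ⊆ X or I ⊆ (X:_R M); (3) for every left ideal I of R and every submodule Y of M, YI ⊆ X and YI ⊄ φ(X) imply Y ⊆ X or I ⊆ (X:_R M); (4) for every a ∈ R and submodule Y of M, Y(RaR) ⊆ X and Y(RaR) ⊄ φ(X) imply Y ⊆ X or a ∈ (X:_R M); (5) for every a ∈ R and submodule Y of M, Y(aR) ⊆ X and Y(aR) ⊄ φ(X) imply Y ⊆ X or a ∈ (X:_R M); (6) for every a ∈ R and submodule Y of M, Y(Ra) ⊆ X and Y(Ra) ⊄ φ(X) imply Y ⊆ X or a ∈ (X:_R M). -/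
/-! Since `Y` is a submodule, `Y(RaR) = Y(aR) = Y(Ra) = Ya`, so (4)–(6) are one condition on the
products `Ya`, and it follows from (1)–(3) by taking for `I` the ideal generated by `a`.
Conversely, let `YI ⊆ X`, `YI ⊄ φ(X)` and `Y ⊄ X`. Every `a ∈ I` with `Ya ⊄ φ(X)` lies in
`(X :_R M)`. If `Ya ⊆ φ(X)`, then `φ(X)` is nonempty, hence a submodule, and some `b ∈ I` has
`Yb ⊄ φ(X)`; then also `Y(a + b) ⊄ φ(X)`, so `a = (a + b) - b ∈ (X :_R M)`. -/

open MulOpposite Submodule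

variable {R : Type*} [Ring R] {M : Type*} [AddCommGroup M] [Module Rᵐᵒᵖ M]

/-- The product `Y·A` of a set of elements of a right `R`-module `M` and a set of ring
elements: the submodule of all finite sums `Σ yᵢ·aᵢ` with `yᵢ ∈ Y`, `aᵢ ∈ A`. -/
def sProd (Y : Set M) (A : Set R) : Submodule Rᵐᵒᵖ M :=
  Submodule.span Rᵐᵒᵖ {z | ∃ y ∈ Y, ∃ a ∈ A, z = op a • y}

/-- `(X :_R N) = {r : R | N·r ⊆ X}`. -/
def colR (X : Set M) (N : Set M) : Set R := {r | ∀ m ∈ N, op r • m ∈ X}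

/-- `(X :_M A) = {m : M | m·A ⊆ X}`. -/
def colM (X : Set M) (A : Set R) : Set M := {m | ∀ r ∈ A, op r • m ∈ X}

/-- A function `φ : S(M) → S(M) ∪ {∅}` (values are either `∅` or submodules) with
`φ(X) ⊆ X` for every submodule `X`. -/
def GoodPhi (φ : Submodule Rᵐᵒᵖ M → Set M) : Prop :=
  ∀ N : Submodule Rᵐᵒᵖ M, φ N ⊆ N ∧
    (φ N = (∅ : Set M) ∨ ∃ P : Submodule Rᵐᵒᵖ M, φ N = (P : Set M))

/-- `X` is a φ-prime submodule of the right `R`-module `M`. -/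
def PhiPrime (φ : Submodule Rᵐᵒᵖ M → Set M) (X : Submodule Rᵐᵒᵖ M) : Prop :=
  X ≠ ⊤ ∧ ∀ (Y : Submodule Rᵐᵒᵖ M) (I : TwoSidedIdeal R),
    (sProd (Y : Set M) (I : Set R) : Set M) ⊆ (X : Set M) →
    ¬((sProd (Y : Set M) (I : Set R) : Set M) ⊆ φ X) →
    (Y : Set M) ⊆ (X : Set M) ∨ (I : Set R) ⊆ colR (X : Set M) Set.univ

/-- `X` is a prime submodule of the right `R`-module `M`. -/
def PrimeSub (X : Submodule Rᵐᵒᵖ M) : Prop :=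
  X ≠ ⊤ ∧ ∀ (Y : Submodule Rᵐᵒᵖ M) (I : TwoSidedIdeal R),
    (sProd (Y : Set M) (I : Set R) : Set M) ⊆ (X : Set M) →
    (Y : Set M) ⊆ (X : Set M) ∨ (I : Set R) ⊆ colR (X : Set M) Set.univ

/-- `X` is a weakly prime submodule of the right `R`-module `M`. -/
def WeaklyPrime (X : Submodule Rᵐᵒᵖ M) : Prop :=
  X ≠ ⊤ ∧ ∀ (Y : Submodule Rᵐᵒᵖ M) (I : TwoSidedIdeal R),
    sProd (Y : Set M) (I : Set R) ≠ ⊥ →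
    (sProd (Y : Set M) (I : Set R) : Set M) ⊆ (X : Set M) →
    (Y : Set M) ⊆ (X : Set M) ∨ (I : Set R) ⊆ colR (X : Set M) Set.univ

/-- `X` is an almost prime submodule of the right `R`-module `M`. -/
def AlmostPrime (X : Submodule Rᵐᵒᵖ M) : Prop :=
  X ≠ ⊤ ∧ ∀ (Y : Submodule Rᵐᵒᵖ M) (I : TwoSidedIdeal R),
    (sProd (Y : Set M) (I : Set R) : Set M) ⊆ (X : Set M) →
    ¬((sProd (Y : Set M) (I : Set R) : Set M) ⊆
        (sProd (X : Set M) ((colR (X : Set M) Set.univ : Set R)) : Set M)) →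
    (Y : Set M) ⊆ (X : Set M) ∨ (I : Set R) ⊆ colR (X : Set M) Set.univ

/-- `powAct X n = X (X :_R M)ⁿ`. -/
def powAct (X : Submodule Rᵐᵒᵖ M) : ℕ → Submodule Rᵐᵒᵖ M
  | 0 => X
  | n + 1 => sProd (powAct X n : Set M) ((colR (X : Set M) Set.univ : Set R))

/-- The product of two sets of ring elements: all finite sums `Σ aᵢbᵢ`, `aᵢ ∈ A`, `bᵢ ∈ B`. -/
def idMul (A B : Set R) : Set R :=
  (AddSubmonoid.closure {x | ∃ a ∈ A, ∃ b ∈ B, x = a * b} : AddSubmonoid R)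

/-- A prime (two-sided) ideal of a possibly noncommutative ring. -/
def TIPrime (P : TwoSidedIdeal R) : Prop :=
  (P : Set R) ≠ Set.univ ∧ ∀ I J : TwoSidedIdeal R,
    idMul (I : Set R) (J : Set R) ⊆ (P : Set R) →
    (I : Set R) ⊆ (P : Set R) ∨ (J : Set R) ⊆ (P : Set R)

/-- The radical `√A`: the intersection of all prime two-sided ideals containing `A`. -/
def radSet (A : Set R) : Set R :=
  {x | ∀ P : TwoSidedIdeal R, TIPrime P → A ⊆ (P : Set R) → x ∈ (P : Set R)}

/-- A ψ-prime two-sided ideal of a possibly noncommutative ring. -/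
def PsiPrime (ψ : TwoSidedIdeal R → Set R) (A : TwoSidedIdeal R) : Prop :=
  (A : Set R) ≠ Set.univ ∧ ∀ I J : TwoSidedIdeal R,
    idMul (I : Set R) (J : Set R) ⊆ (A : Set R) →
    ¬(idMul (I : Set R) (J : Set R) ⊆ ψ A) →
    (I : Set R) ⊆ (A : Set R) ∨ (J : Set R) ⊆ (A : Set R)

/-- The induced function `φ_Y` on submodules of `M/Y`: `φ_Y(X/Y) = (φ(X)+Y)/Y`. -/
def phiQuot (φ : Submodule Rᵐᵒᵖ M → Set M) (Y : Submodule Rᵐᵒᵖ M) :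
    Submodule Rᵐᵒᵖ (M ⧸ Y) → Set (M ⧸ Y) :=
  fun Q => Y.mkQ '' (φ (Q.comap Y.mkQ))

/-- The colon `(X :_R Y)` of two submodules, as a two-sided ideal of `R`. -/
def colTI (X Y : Submodule Rᵐᵒᵖ M) : TwoSidedIdeal R :=
  TwoSidedIdeal.mk' (colR (X : Set M) (Y : Set M))
    (by intro m hm; simp)
    (by intro x y hx hy m hm
        rw [op_add, add_smul]
        exact X.add_mem (hx m hm) (hy m hm))
    (by intro x hx m hm
        rw [op_neg, neg_smul]
        exact X.neg_mem (hx m hm))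
    (by intro x y hy m hm
        rw [op_mul, mul_smul]
        exact hy _ (Y.smul_mem (op x) hm))
    (by intro x y hx m hm
        rw [op_mul, mul_smul]
        exact X.smul_mem (op y) (hx m hm))

/-- The colon `(X :_M I)` as a submodule of `M`, for a two-sided ideal `I`. -/
def colMS (X : Submodule Rᵐᵒᵖ M) (I : TwoSidedIdeal R) : Submodule Rᵐᵒᵖ M where
  carrier := colM (X : Set M) (I : Set R)
  add_mem' := by
    intro a b ha hb r hr
    rw [smul_add]
    exact X.add_mem (ha r hr) (hb r hr)
  zero_mem' := by
    intro r hr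
    rw [smul_zero]
    exact X.zero_mem
  smul_mem' := by
    intro c m hm r hr
    rw [← mul_smul, show op r * c = op (unop c * r) from by rw [op_mul, op_unop]]
    exact hm _ (I.mul_mem_left _ _ hr)

/-- `M` is a multiplication right `R`-module: every submodule `X` equals `M(X :_R M)`. -/
def IsMultiplication (R : Type*) [Ring R] (M : Type*) [AddCommGroup M]
    [Module Rᵐᵒᵖ M] : Prop :=
  ∀ X : Submodule Rᵐᵒᵖ M, X = sProd (Set.univ : Set M) ((colR (X : Set M) Set.univ : Set R))

/-- The product `XY = M(X :_R M)(Y :_R M)` of two submodules of a multiplication module. -/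
def mprod (X Y : Submodule Rᵐᵒᵖ M) : Submodule Rᵐᵒᵖ M :=
  sProd ((sProd (Set.univ : Set M) ((colR (X : Set M) Set.univ : Set R)) : Submodule Rᵐᵒᵖ M) : Set M)
    ((colR (Y : Set M) Set.univ : Set R))

/-- A φ-m-system in a right `R`-module `M`. -/
def PhiMSystem (φ : Submodule Rᵐᵒᵖ M → Set M) (S : Set M) : Prop :=
  S.Nonempty ∧ ∀ (Y₁ Y₂ : Submodule Rᵐᵒᵖ M) (I : TwoSidedIdeal R),
    ((Y₁ ⊔ Y₂ : Submodule Rᵐᵒᵖ M) : Set M) ∩ S ≠ ∅ →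
    ((Y₁ ⊔ sProd (Set.univ : Set M) (I : Set R) : Submodule Rᵐᵒᵖ M) : Set M) ∩ S ≠ ∅ →
    ¬((sProd (Y₂ : Set M) (I : Set R) : Set M) ⊆ φ (Submodule.span Rᵐᵒᵖ Sᶜ)) →
    ((Y₁ ⊔ sProd (Y₂ : Set M) (I : Set R) : Submodule Rᵐᵒᵖ M) : Set M) ∩ S ≠ ∅
section SProd

variable {A : Set R} {a : R}

lemma smul_mem_sProd {Y : Set M} (ha : a ∈ A) {y : M} (hy : y ∈ Y) : op a • y ∈ sProd Y A :=
  Submodule.subset_span ⟨y, hy, a, ha, rfl⟩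

lemma sProd_le_iff {Y : Set M} {X : Submodule Rᵐᵒᵖ M} :
    sProd Y A ≤ X ↔ ∀ a ∈ A, ∀ y ∈ Y, op a • y ∈ X := by
  simp only [sProd, Submodule.span_le, Set.subset_def, Set.mem_ofPred_eq, SetLike.mem_coe]
  exact ⟨fun h a ha y hy => h _ ⟨y, hy, a, ha, rfl⟩,
    by rintro h _ ⟨y, hy, a, ha, rfl⟩; exact h a ha y hy⟩

lemma sProd_mono {Y : Set M} {B : Set R} (h : A ⊆ B) : sProd Y A ≤ sProd Y B :=
  sProd_le_iff.mpr fun _ ha _ hy => smul_mem_sProd (h ha) hy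

variable {Y : Submodule Rᵐᵒᵖ M}

lemma mem_colTI {X N : Submodule Rᵐᵒᵖ M} {x : R} :
    x ∈ colTI X N ↔ ∀ m ∈ N, op x • m ∈ X :=
  TwoSidedIdeal.mem_mk' ..

lemma mem_colTI_sProd_singleton : a ∈ colTI (sProd (Y : Set M) {a}) Y :=
  mem_colTI.mpr fun _ hy => smul_mem_sProd (Set.mem_singleton _) hy

lemma sProd_eq_sProd_singleton (ha : a ∈ A) (hA : A ⊆ colTI (sProd (Y : Set M) {a}) Y) :
    sProd (Y : Set M) A = sProd (Y : Set M) {a} :=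
  le_antisymm (sProd_le_iff.mpr fun _ hx _ hy => mem_colTI.mp (hA hx) _ hy)
    (sProd_mono (Set.singleton_subset_iff.mpr ha))

lemma sProd_twoSidedSpan_singleton :
    sProd (Y : Set M) (TwoSidedIdeal.span {a} : Set R) = sProd (Y : Set M) {a} :=
  sProd_eq_sProd_singleton (TwoSidedIdeal.subset_span (Set.mem_singleton a))
    (TwoSidedIdeal.span_le.mpr (Set.singleton_subset_iff.mpr mem_colTI_sProd_singleton))

lemma sProd_rightSpan_singleton :
    sProd (Y : Set M) (Submodule.span Rᵐᵒᵖ {a} : Set R) = sProd (Y : Set M) {a} := by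
  refine sProd_eq_sProd_singleton (Submodule.mem_span_singleton_self a) ?_
  intro x hx
  obtain ⟨r, rfl⟩ := Submodule.mem_span_singleton.mp hx
  exact (colTI _ _).mul_mem_right _ (unop r) mem_colTI_sProd_singleton

lemma sProd_leftSpan_singleton :
    sProd (Y : Set M) (Ideal.span {a} : Set R) = sProd (Y : Set M) {a} := by
  refine sProd_eq_sProd_singleton (Ideal.mem_span_singleton_self a) ?_
  intro x hx
  obtain ⟨r, rfl⟩ := Ideal.mem_span_singleton'.mp hx
  exact (colTI _ _).mul_mem_left r _ mem_colTI_sProd_singleton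

lemma sProd_RaR :
    sProd (Y : Set M) {x : R | ∃ r s : R, x = r * a * s} = sProd (Y : Set M) {a} := by
  refine sProd_eq_sProd_singleton ⟨1, 1, by rw [one_mul, mul_one]⟩ ?_
  rintro _ ⟨r, s, rfl⟩
  exact (colTI _ _).mul_mem_right _ s ((colTI _ _).mul_mem_left r _ mem_colTI_sProd_singleton)

lemma sProd_aR :
    sProd (Y : Set M) {x : R | ∃ r : R, x = a * r} = sProd (Y : Set M) {a} := by
  refine sProd_eq_sProd_singleton ⟨1, (mul_one a).symm⟩ ?_
  rintro _ ⟨r, rfl⟩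
  exact (colTI _ _).mul_mem_right _ r mem_colTI_sProd_singleton

lemma sProd_Ra :
    sProd (Y : Set M) {x : R | ∃ r : R, x = r * a} = sProd (Y : Set M) {a} := by
  refine sProd_eq_sProd_singleton ⟨1, (one_mul a).symm⟩ ?_
  rintro _ ⟨r, rfl⟩
  exact (colTI _ _).mul_mem_left r _ mem_colTI_sProd_singleton

end SProd

lemma subset_or_subset_colR_of_singleton {φ : Submodule Rᵐᵒᵖ M → Set M} (hφ : GoodPhi φ)
    {X : Submodule Rᵐᵒᵖ M}
    (hE : ∀ (a : R) (Y : Submodule Rᵐᵒᵖ M),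
      (sProd (Y : Set M) {a} : Set M) ⊆ X → ¬(sProd (Y : Set M) {a} : Set M) ⊆ φ X →
      (Y : Set M) ⊆ X ∨ a ∈ colR (X : Set M) Set.univ)
    {T : Set R} (hT : ∀ a ∈ T, ∀ b ∈ T, a + b ∈ T) {Y : Submodule Rᵐᵒᵖ M}
    (hYT : (sProd (Y : Set M) T : Set M) ⊆ X) (hYTφ : ¬(sProd (Y : Set M) T : Set M) ⊆ φ X) :
    (Y : Set M) ⊆ X ∨ T ⊆ colR (X : Set M) Set.univ := by
  refine or_iff_not_imp_left.mpr fun hYX a ha => ?_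
  have hcol : ∀ c ∈ T, ¬(sProd (Y : Set M) {c} : Set M) ⊆ φ X → c ∈ colR (X : Set M) Set.univ :=
    fun c hc hcφ => (hE c Y (subset_trans (sProd_mono (Set.singleton_subset_iff.mpr hc)) hYT)
      hcφ).resolve_left hYX
  by_cases haφ : (sProd (Y : Set M) {a} : Set M) ⊆ φ X
  swap
  · exact hcol a ha haφ
  obtain ⟨P, hP⟩ : ∃ P : Submodule Rᵐᵒᵖ M, φ X = P :=
    (hφ X).2.resolve_left (Set.nonempty_iff_ne_empty.mp ⟨0, haφ (zero_mem _)⟩)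
  rw [hP] at haφ hYTφ hcol
  obtain ⟨b, hb, y, hy, hby⟩ : ∃ b ∈ T, ∃ y ∈ Y, op b • y ∉ P := by
    simpa [SetLike.coe_subset_coe, sProd_le_iff] using hYTφ
  have hay : op a • y ∈ P := haφ (smul_mem_sProd (Set.mem_singleton _) hy)
  have hbX := hcol b hb fun h => hby (h (smul_mem_sProd (Set.mem_singleton _) hy))
  have habX := hcol (a + b) (hT a ha b hb) fun h => hby <| by
    simpa [op_add, add_smul] using P.sub_mem (h (smul_mem_sProd (Set.mem_singleton _) hy)) hay
  intro m _
  rw [show op a • m = op (a + b) • m - op b • m by rw [op_add, add_smul, add_sub_cancel_right]]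
  exact X.sub_mem (habX m trivial) (hbX m trivial)

/-- For a proper submodule `X` of `M`, TFAE: (1) `X` is φ-prime;
(2) the φ-prime condition for all right ideals; (3) for all left ideals;
(4) for the two-sided ideals `RaR`; (5) for the right ideals `aR`;
(6) for the left ideals `Ra`. -/
theorem stmt_1 (φ : Submodule Rᵐᵒᵖ M → Set M) (hφ : GoodPhi φ)
    (X : Submodule Rᵐᵒᵖ M) (hX : X ≠ ⊤) :
    [PhiPrime φ X,
     ∀ (I : Submodule Rᵐᵒᵖ R) (Y : Submodule Rᵐᵒᵖ M),
       (sProd (Y : Set M) (I : Set R) : Set M) ⊆ (X : Set M) →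
       ¬((sProd (Y : Set M) (I : Set R) : Set M) ⊆ φ X) →
       (Y : Set M) ⊆ (X : Set M) ∨ (I : Set R) ⊆ (colR (X : Set M) Set.univ : Set R),
     ∀ (I : Ideal R) (Y : Submodule Rᵐᵒᵖ M),
       (sProd (Y : Set M) (I : Set R) : Set M) ⊆ (X : Set M) →
       ¬((sProd (Y : Set M) (I : Set R) : Set M) ⊆ φ X) →
       (Y : Set M) ⊆ (X : Set M) ∨ (I : Set R) ⊆ (colR (X : Set M) Set.univ : Set R),
     ∀ (a : R) (Y : Submodule Rᵐᵒᵖ M),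
       (sProd (Y : Set M) {x : R | ∃ r s : R, x = r * a * s} : Set M) ⊆ (X : Set M) →
       ¬((sProd (Y : Set M) {x : R | ∃ r s : R, x = r * a * s} : Set M) ⊆ φ X) →
       (Y : Set M) ⊆ (X : Set M) ∨ a ∈ (colR (X : Set M) Set.univ : Set R),
     ∀ (a : R) (Y : Submodule Rᵐᵒᵖ M),
       (sProd (Y : Set M) {x : R | ∃ r : R, x = a * r} : Set M) ⊆ (X : Set M) →
       ¬((sProd (Y : Set M) {x : R | ∃ r : R, x = a * r} : Set M) ⊆ φ X) →
       (Y : Set M) ⊆ (X : Set M) ∨ a ∈ (colR (X : Set M) Set.univ : Set R),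
     ∀ (a : R) (Y : Submodule Rᵐᵒᵖ M),
       (sProd (Y : Set M) {x : R | ∃ r : R, x = r * a} : Set M) ⊆ (X : Set M) →
       ¬((sProd (Y : Set M) {x : R | ∃ r : R, x = r * a} : Set M) ⊆ φ X) →
       (Y : Set M) ⊆ (X : Set M) ∨ a ∈ (colR (X : Set M) Set.univ : Set R)].TFAE := by
  tfae_have 4 ↔ 5 := by simp only [sProd_RaR, sProd_aR]
  tfae_have 5 ↔ 6 := by simp only [sProd_aR, sProd_Ra]
  tfae_have 1 → 4 := fun h a Y => by
    rw [sProd_RaR, ← sProd_twoSidedSpan_singleton]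
    exact fun h₁ h₂ =>
      (h.2 Y _ h₁ h₂).imp_right fun h => h (TwoSidedIdeal.subset_span (Set.mem_singleton a))
  tfae_have 2 → 5 := fun h a Y => by
    rw [sProd_aR, ← sProd_rightSpan_singleton]
    exact fun h₁ h₂ => (h _ Y h₁ h₂).imp_right fun h => h (Submodule.mem_span_singleton_self a)
  tfae_have 3 → 6 := fun h a Y => by
    rw [sProd_Ra, ← sProd_leftSpan_singleton]
    exact fun h₁ h₂ => (h _ Y h₁ h₂).imp_right fun h => h (Ideal.mem_span_singleton_self a)
  tfae_have 4 → 1 := fun h => ⟨hX, fun Y I => subset_or_subset_colR_of_singleton hφ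
    (by simpa only [sProd_RaR] using h) fun _ ha _ hb => I.add_mem ha hb⟩
  tfae_have 4 → 2 := fun h I Y => subset_or_subset_colR_of_singleton hφ
    (by simpa only [sProd_RaR] using h) fun _ ha _ hb => I.add_mem ha hb
  tfae_have 4 → 3 := fun h I Y => subset_or_subset_colR_of_singleton hφ
    (by simpa only [sProd_RaR] using h) fun _ ha _ hb => I.add_mem ha hb
  tfae_finish
end

section
/- Let X and Y be proper submodules of M with Y ⊆ X. Then: (1) if φ(X) ⊆ Y and X is a φ-prime submodule of M, then X/Y is a weakly prime submodule of M/Y; (2) if φ(Y) ⊆ φ(X), Y is a φ-prime submodule of M, and X/Y is a weakly prime submodule of M/Y, then X is a φ-prime submodule of M. -/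
open MulOpposite Submodule

variable {R : Type*} [Ring R] {M : Type*} [AddCommGroup M] [Module Rᵐᵒᵖ M]

/-! Everything transfers along the quotient map `π : M → M/Y`: it sends `Z·I` to `π(Z)·I`,
and `π(Z)·I = 0` exactly when `Z·I ⊆ Y`. For (1), `φ(X) ⊆ Y` turns the nonvanishing of a
product in `M/Y` into the condition `Z·I ⊄ φ(X)`. For (2), a product inside `Y` is handled by
the φ-primality of `Y` (using `φ(Y) ⊆ φ(X)`), and one outside `Y` has a nonzero image in
`M/Y`, where weak primality of `X/Y` applies. -/

section Quotient

variable {M₂ : Type*} [AddCommGroup M₂] [Module Rᵐᵒᵖ M₂]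

theorem map_sProd (f : M →ₗ[Rᵐᵒᵖ] M₂) (S : Set M) (A : Set R) :
    (sProd S A).map f = sProd (f '' S) A := by
  rw [sProd, sProd, Submodule.map_span]
  congr 1
  ext z
  constructor
  · rintro ⟨w, ⟨y, hy, a, ha, rfl⟩, rfl⟩
    exact ⟨f y, ⟨y, hy, rfl⟩, a, ha, map_smul f _ _⟩
  · rintro ⟨y, ⟨y₀, hy₀, rfl⟩, a, ha, rfl⟩
    exact ⟨op a • y₀, ⟨y₀, hy₀, a, ha, rfl⟩, map_smul f _ _⟩

variable {X Y : Submodule Rᵐᵒᵖ M}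

theorem sProd_map_mkQ (Z : Submodule Rᵐᵒᵖ M) (A : Set R) :
    sProd (Z.map Y.mkQ : Set (M ⧸ Y)) A = (sProd (Z : Set M) A).map Y.mkQ := by
  rw [map_sProd, Submodule.map_coe]

theorem map_mkQ_eq_bot_iff {N : Submodule Rᵐᵒᵖ M} : N.map Y.mkQ = ⊥ ↔ N ≤ Y := by
  rw [← LinearMap.le_ker_iff_map, Submodule.ker_mkQ]

theorem map_mkQ_le_map_mkQ_iff (hYX : Y ≤ X) {N : Submodule Rᵐᵒᵖ M} :
    N.map Y.mkQ ≤ X.map Y.mkQ ↔ N ≤ X := by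
  rw [Submodule.map_le_iff_le_comap, Submodule.comap_map_mkQ, sup_eq_right.mpr hYX]

theorem map_mkQ_ne_top_iff (hYX : Y ≤ X) : X.map Y.mkQ ≠ ⊤ ↔ X ≠ ⊤ := by
  rw [Ne, Submodule.map_mkQ_eq_top, sup_eq_right.mpr hYX]

theorem mem_colR_map_mkQ_iff (hYX : Y ≤ X) {r : R} :
    r ∈ colR (X.map Y.mkQ : Set (M ⧸ Y)) Set.univ ↔
      r ∈ colR (X : Set M) Set.univ := by
  simp only [colR, Set.mem_univ, true_implies, Set.mem_ofPred_eq, SetLike.mem_coe]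
  constructor
  · intro h m
    have hm : op r • m ∈ (X.map Y.mkQ).comap Y.mkQ := by
      simpa only [Submodule.mem_comap, map_smul] using h (Y.mkQ m)
    rwa [Submodule.comap_map_mkQ, sup_eq_right.mpr hYX] at hm
  · intro h q
    obtain ⟨m, rfl⟩ := Y.mkQ_surjective q
    rw [← map_smul]
    exact Submodule.mem_map_of_mem (h m)

end Quotient

section PhiPrime

variable {φ : Submodule Rᵐᵒᵖ M → Set M} {X Y : Submodule Rᵐᵒᵖ M}

theorem PhiPrime.weaklyPrime_map_mkQ (hXp : PhiPrime φ X) (hYX : Y ≤ X) (hφX : φ X ⊆ Y) :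
    WeaklyPrime (X.map Y.mkQ) := by
  refine ⟨(map_mkQ_ne_top_iff hYX).mpr hXp.1, fun Z I hZI hZIX => ?_⟩
  obtain ⟨Z, rfl⟩ : ∃ Z' : Submodule Rᵐᵒᵖ M, Z'.map Y.mkQ = Z :=
    ⟨_, Submodule.map_comap_eq_of_surjective Y.mkQ_surjective Z⟩
  rw [sProd_map_mkQ, Ne, map_mkQ_eq_bot_iff] at hZI
  rw [sProd_map_mkQ, SetLike.coe_subset_coe, map_mkQ_le_map_mkQ_iff hYX] at hZIX
  rcases hXp.2 Z I hZIX fun h => hZI (h.trans hφX) with hZX | hIX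
  · left
    rwa [SetLike.coe_subset_coe, map_mkQ_le_map_mkQ_iff hYX]
  · exact Or.inr fun r hr => (mem_colR_map_mkQ_iff hYX).mpr (hIX hr)

theorem PhiPrime.of_weaklyPrime_map_mkQ (hYp : PhiPrime φ Y) (hYX : Y ≤ X) (hφ : φ Y ⊆ φ X)
    (hW : WeaklyPrime (X.map Y.mkQ)) : PhiPrime φ X := by
  refine ⟨(map_mkQ_ne_top_iff hYX).mp hW.1, fun Z I hZIX hZIφ => ?_⟩
  by_cases hZIY : sProd (Z : Set M) (I : Set R) ≤ Y
  · rcases hYp.2 Z I hZIY fun h => hZIφ (h.trans hφ) with hZY | hIY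
    · exact Or.inl (hZY.trans hYX)
    · exact Or.inr fun r hr m hm => hYX (hIY hr m hm)
  · have hne : sProd (Z.map Y.mkQ : Set (M ⧸ Y)) (I : Set R) ≠ ⊥ := by
      rwa [sProd_map_mkQ, Ne, map_mkQ_eq_bot_iff]
    have hle : (sProd (Z.map Y.mkQ : Set (M ⧸ Y)) (I : Set R) : Set (M ⧸ Y)) ⊆ X.map Y.mkQ := by
      rw [sProd_map_mkQ, SetLike.coe_subset_coe, map_mkQ_le_map_mkQ_iff hYX]
      exact hZIX
    rcases hW.2 _ I hne hle with hZX | hIX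
    · left
      rwa [SetLike.coe_subset_coe, map_mkQ_le_map_mkQ_iff hYX] at hZX
    · exact Or.inr fun r hr => (mem_colR_map_mkQ_iff hYX).mp (hIX hr)

end PhiPrime

theorem stmt_7_general (φ : Submodule Rᵐᵒᵖ M → Set M)
    (X Y : Submodule Rᵐᵒᵖ M) (hYX : Y ≤ X) :
    (φ X ⊆ (Y : Set M) → PhiPrime φ X → WeaklyPrime (X.map Y.mkQ)) ∧
    (φ Y ⊆ φ X → PhiPrime φ Y → WeaklyPrime (X.map Y.mkQ) → PhiPrime φ X) :=
  ⟨fun hφX hXp => hXp.weaklyPrime_map_mkQ hYX hφX,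
    fun hφ hYp hW => hYp.of_weaklyPrime_map_mkQ hYX hφ hW⟩

/-- Let `X, Y` be proper submodules of `M` with `Y ⊆ X`. Then:
(1) if `φ(X) ⊆ Y` and `X` is φ-prime, then `X/Y` is weakly prime in `M/Y`;
(2) if `φ(Y) ⊆ φ(X)`, `Y` is φ-prime and `X/Y` is weakly prime in `M/Y`, then `X`
is φ-prime. -/
theorem stmt_7 (φ : Submodule Rᵐᵒᵖ M → Set M) (hφ : GoodPhi φ)
    (X Y : Submodule Rᵐᵒᵖ M) (hX : X ≠ ⊤) (hY : Y ≠ ⊤) (hYX : Y ≤ X) :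
    (φ X ⊆ (Y : Set M) → PhiPrime φ X → WeaklyPrime (X.map Y.mkQ)) ∧
    (φ Y ⊆ φ X → PhiPrime φ Y → WeaklyPrime (X.map Y.mkQ) → PhiPrime φ X) :=
  stmt_7_general φ X Y hYX
end
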